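/- Let (Σ, T, μ) be a shift system with α-mixing coefficients α(·), n an integer, and A ∈ ℱ_0^{n-1}. Write H(k) = μ(τ_A > k). Then for every integer s > 2n and every integer j ≥ 1, |H(js) − H((j−1)s) · H(s − 2n)| ≤ μ(τ_A ≤ 2n) + α(n). -/

import Mathlib

/-!
Cut the window `(0, js]` at `a = (j-1)s` and `a + 2n` into `(0, a]`, a gap `(a, a + 2n]` and
`(a + 2n, js]`. Avoiding `A` on the two outer pieces differs from avoiding it on the whole
window at most by hitting `A` in the gap, which by invariance has probability `μ(τ_A ≤ 2n)`.
Since `A` only depends on `n` coordinates, the event for `(0, a]` lies in `ℱ_0^{a+n-1}` and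
the one for `(a + 2n, js]` in `ℱ_{a+2n+1}^{js+n-1}`, a gap of more than `n`, so their
correlation is at most `α(n)`; by invariance the second has probability `H(s - 2n)`.
-/

open MeasureTheory Filter Set
open scoped ENNReal Topology

noncomputable section

/-- First hitting time (at time ≥ 1) of the set `A` under `T`, valued in `ℕ∞`. -/
def hitTime {X : Type*} (T : X → X) (A : Set X) (x : X) : ℕ∞ :=
  ⨅ k ∈ {k : ℕ | 1 ≤ k ∧ T^[k] x ∈ A}, (k : ℕ∞)

/-- The shift map on one-sided sequences. -/
def shift (𝒜 : Type*) : (ℕ → 𝒜) → (ℕ → 𝒜) := fun x n => x (n + 1)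

/-- The σ-algebra `ℱ_m^n` generated by the coordinates `m, …, n`. -/
def coordSigma (𝒜 : Type*) [m𝒜 : MeasurableSpace 𝒜] (m n : ℕ) :
    MeasurableSpace (ℕ → 𝒜) :=
  ⨆ i ∈ Set.Icc m n, m𝒜.comap (fun x => x i)

/-- The α-mixing coefficient `α(g)`. -/
def alphaMix {𝒜 : Type*} [MeasurableSpace 𝒜] (μ : Measure (ℕ → 𝒜)) (g : ℕ) : ℝ :=
  ⨆ m : ℕ, ⨆ n : ℕ,
    ⨆ A : {A : Set (ℕ → 𝒜) // MeasurableSet[coordSigma 𝒜 0 n] A},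
      ⨆ B : {B : Set (ℕ → 𝒜) // MeasurableSet[coordSigma 𝒜 (n + g) (m + g)] B},
        |(μ ((A : Set (ℕ → 𝒜)) ∩ B)).toReal - (μ A).toReal * (μ B).toReal|

lemma abs_measureReal_sub_le_of_subset_of_subset_union {Ω : Type*} [MeasurableSpace Ω]
    {μ : Measure Ω} [IsFiniteMeasure μ] {s t u : Set Ω} (hst : s ⊆ t) (hts : t ⊆ s ∪ u) :
    |μ.real s - μ.real t| ≤ μ.real u := by
  have h₁ : μ.real s ≤ μ.real t := measureReal_mono hst
  have h₂ : μ.real t ≤ μ.real s + μ.real u :=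
    (measureReal_mono hts).trans (measureReal_union_le s u)
  rw [abs_le]
  constructor <;> linarith [measureReal_nonneg (μ := μ) (s := u)]

lemma abs_measureReal_inter_sub_mul_le_one {Ω : Type*} [MeasurableSpace Ω] (μ : Measure Ω)
    [IsProbabilityMeasure μ] (S T : Set Ω) :
    |μ.real (S ∩ T) - μ.real S * μ.real T| ≤ 1 := by
  have := measureReal_nonneg (μ := μ) (s := S ∩ T)
  have := measureReal_nonneg (μ := μ) (s := S)
  have := measureReal_nonneg (μ := μ) (s := T)
  have : μ.real (S ∩ T) ≤ 1 := measureReal_le_one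
  have : μ.real S ≤ 1 := measureReal_le_one
  have : μ.real T ≤ 1 := measureReal_le_one
  rw [abs_le]
  constructor <;> nlinarith

section HitTime

variable {X : Type*} (T : X → X) (A : Set X)

def noHit (a b : ℕ) : Set X :=
  {x | ∀ i, a < i → i ≤ b → T^[i] x ∉ A}

variable {T A}

lemma noHit_eq_iInter (a b : ℕ) :
    noHit T A a b = ⋂ i, ⋂ (_ : a < i ∧ i ≤ b), T^[i] ⁻¹' Aᶜ := by
  ext x
  simp [noHit]

lemma lt_hitTime_iff {x : X} {k : ℕ} :
    (k : ℕ∞) < hitTime T A x ↔ ∀ i, 1 ≤ i → i ≤ k → T^[i] x ∉ A := by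
  rw [← ENat.add_one_le_iff (ENat.natCast_ne_top k), hitTime, le_iInf₂_iff]
  refine forall_congr' fun i => ?_
  norm_cast
  constructor
  · rintro h hi hik hA
    have := h ⟨hi, hA⟩
    omega
  · rintro h ⟨hi, hA⟩
    by_contra
    exact h hi (by omega) hA

lemma setOf_lt_hitTime_eq_noHit (k : ℕ) :
    {x | (k : ℕ∞) < hitTime T A x} = noHit T A 0 k := by
  ext x
  exact lt_hitTime_iff

lemma setOf_hitTime_le_eq_compl_noHit (k : ℕ) :
    {x | hitTime T A x ≤ (k : ℕ∞)} = (noHit T A 0 k)ᶜ := by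
  rw [← setOf_lt_hitTime_eq_noHit]
  ext
  simp

lemma noHit_anti {a a' b b' : ℕ} (ha : a ≤ a') (hb : b' ≤ b) :
    noHit T A a b ⊆ noHit T A a' b' :=
  fun _ hx i hi hi' => hx i (ha.trans_lt hi) (hi'.trans hb)

lemma noHit_inter_noHit_subset (a b c : ℕ) :
    noHit T A a b ∩ noHit T A b c ⊆ noHit T A a c := by
  rintro x ⟨hab, hbc⟩ i hai hic
  rcases le_or_gt i b with hib | hbi
  exacts [hab i hai hib, hbc i hbi hic]

lemma preimage_iterate_noHit (a b c : ℕ) :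
    T^[c] ⁻¹' noHit T A a b = noHit T A (a + c) (b + c) := by
  ext x
  simp only [noHit, mem_preimage, mem_ofPred_eq, ← Function.iterate_add_apply]
  constructor
  · intro h i hai hib
    simpa [Nat.sub_add_cancel (show c ≤ i by omega)] using h (i - c) (by omega) (by omega)
  · intro h i hai hib
    exact h (i + c) (by omega) (by omega)

variable [MeasurableSpace X]

lemma measurableSet_noHit (hT : Measurable T) (hA : MeasurableSet A) (a b : ℕ) :
    MeasurableSet (noHit T A a b) := by
  rw [noHit_eq_iInter]
  exact .iInter fun i => .iInter fun _ => hA.compl.preimage (hT.iterate i)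

lemma measureReal_noHit_add {μ : Measure X} (hT : MeasurePreserving T μ μ)
    (hA : MeasurableSet A) (a b c : ℕ) :
    μ.real (noHit T A (a + c) (b + c)) = μ.real (noHit T A a b) := by
  rw [← preimage_iterate_noHit]
  exact (hT.iterate c).measureReal_preimage
    (measurableSet_noHit hT.measurable hA a b).nullMeasurableSet

lemma measureReal_compl_noHit_add {μ : Measure X} [IsProbabilityMeasure μ]
    (hT : MeasurePreserving T μ μ) (hA : MeasurableSet A) (a b c : ℕ) :
    μ.real (noHit T A (a + c) (b + c))ᶜ = μ.real (noHit T A a b)ᶜ := by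
  rw [probReal_compl_eq_one_sub (measurableSet_noHit hT.measurable hA _ _),
    probReal_compl_eq_one_sub (measurableSet_noHit hT.measurable hA _ _),
    measureReal_noHit_add hT hA]

lemma abs_measureReal_noHit_sub_inter_le {μ : Measure X} [IsFiniteMeasure μ] {a b c d : ℕ}
    (hac : a ≤ c) (hbd : b ≤ d) :
    |μ.real (noHit T A a d) - μ.real (noHit T A a b ∩ noHit T A c d)| ≤
      μ.real (noHit T A b c)ᶜ := by
  refine abs_measureReal_sub_le_of_subset_of_subset_union
    (subset_inter (noHit_anti le_rfl hbd) (noHit_anti hac le_rfl)) ?_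
  rintro x ⟨hab, hcd⟩
  by_cases hbc : x ∈ noHit T A b c
  · exact .inl (noHit_inter_noHit_subset _ _ _ ⟨noHit_inter_noHit_subset _ _ _ ⟨hab, hbc⟩, hcd⟩)
  · exact .inr hbc

end HitTime

lemma shift_iterate_apply {𝒜 : Type*} (i : ℕ) (x : ℕ → 𝒜) (k : ℕ) :
    (shift 𝒜)^[i] x k = x (k + i) := by
  induction i generalizing x with
  | zero => rfl
  | succ i ih => rw [Function.iterate_succ_apply, ih]; rfl

section Coordinates

variable {𝒜 : Type*} [m𝒜 : MeasurableSpace 𝒜]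

lemma comap_eval_le_coordSigma {a b i : ℕ} (hai : a ≤ i) (hib : i ≤ b) :
    m𝒜.comap (fun x : ℕ → 𝒜 => x i) ≤ coordSigma 𝒜 a b :=
  le_iSup₂ (f := fun i (_ : i ∈ Icc a b) => m𝒜.comap fun x : ℕ → 𝒜 => x i) i ⟨hai, hib⟩

lemma coordSigma_mono {a b a' b' : ℕ} (ha : a' ≤ a) (hb : b ≤ b') :
    coordSigma 𝒜 a b ≤ coordSigma 𝒜 a' b' :=
  iSup₂_le fun _ hi => comap_eval_le_coordSigma (ha.trans hi.1) (hi.2.trans hb)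

lemma coordSigma_le_pi (a b : ℕ) : coordSigma 𝒜 a b ≤ MeasurableSpace.pi :=
  iSup₂_le fun i _ => (measurable_pi_apply i).comap_le

lemma measurable_shift_iterate_coordSigma (i a b : ℕ) :
    Measurable[coordSigma 𝒜 (a + i) (b + i), coordSigma 𝒜 a b] (shift 𝒜)^[i] := by
  rw [measurable_iff_comap_le, coordSigma]
  simp only [MeasurableSpace.comap_iSup, MeasurableSpace.comap_comp]
  refine iSup₂_le fun k ⟨hak, hkb⟩ => ?_
  have : (fun x : ℕ → 𝒜 => x k) ∘ (shift 𝒜)^[i] = fun x => x (k + i) :=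
    funext fun x => shift_iterate_apply i x k
  rw [this]
  exact comap_eval_le_coordSigma (by omega) (by omega)

lemma measurableSet_noHit_coordSigma {A : Set (ℕ → 𝒜)} {p : ℕ}
    (hA : MeasurableSet[coordSigma 𝒜 0 p] A) {a b c d : ℕ} (hc : c ≤ a + 1) (hd : b + p ≤ d) :
    MeasurableSet[coordSigma 𝒜 c d] (noHit (shift 𝒜) A a b) := by
  rw [noHit_eq_iInter]
  refine .iInter fun i => .iInter fun hi => ?_
  refine coordSigma_mono (a := 0 + i) (b := p + i) (by omega) (by omega) _ ?_
  exact measurable_shift_iterate_coordSigma i 0 p hA.compl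

end Coordinates

lemma abs_measureReal_inter_sub_mul_le_alphaMix {𝒜 : Type*} [MeasurableSpace 𝒜]
    (μ : Measure (ℕ → 𝒜)) [IsProbabilityMeasure μ] {g M N : ℕ} {S T : Set (ℕ → 𝒜)}
    (hS : MeasurableSet[coordSigma 𝒜 0 N] S)
    (hT : MeasurableSet[coordSigma 𝒜 (N + g) (M + g)] T) :
    |μ.real (S ∩ T) - μ.real S * μ.real T| ≤ alphaMix μ g := by
  -- `alphaMix` is an iterated supremum in `ℝ`: `le_ciSup` needs every level bounded above (by 1).
  refine le_ciSup_of_le ⟨1, ?_⟩ M <| le_ciSup_of_le ⟨1, ?_⟩ N <|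
    le_ciSup_of_le ⟨1, ?_⟩ ⟨S, hS⟩ <| le_ciSup_of_le ⟨1, ?_⟩ ⟨T, hT⟩ le_rfl
  all_goals
    rintro _ ⟨_, rfl⟩
    repeat refine Real.iSup_le (fun _ => ?_) zero_le_one
    exact abs_measureReal_inter_sub_mul_le_one μ _ _

theorem tail_almost_multiplicative_general
    {𝒜 : Type*} [MeasurableSpace 𝒜]
    (μ : Measure (ℕ → 𝒜)) [IsProbabilityMeasure μ]
    (hT : MeasurePreserving (shift 𝒜) μ μ)
    (n : ℕ) (A : Set (ℕ → 𝒜))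
    (hAmeas : MeasurableSet[coordSigma 𝒜 0 (n - 1)] A)
    (s : ℕ) (hs : 2 * n < s) (j : ℕ) (hj : 1 ≤ j) :
    |(μ {x | ((j * s : ℕ) : ℕ∞) < hitTime (shift 𝒜) A x}).toReal -
        (μ {x | (((j - 1) * s : ℕ) : ℕ∞) < hitTime (shift 𝒜) A x}).toReal *
          (μ {x | ((s - 2 * n : ℕ) : ℕ∞) < hitTime (shift 𝒜) A x}).toReal| ≤
      (μ {x | hitTime (shift 𝒜) A x ≤ ((2 * n : ℕ) : ℕ∞)}).toReal + alphaMix μ n := by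
  obtain ⟨q, rfl⟩ : ∃ q, j = q + 1 := ⟨j - 1, by omega⟩
  rw [add_tsub_cancel_right, add_one_mul]
  set a := q * s
  simp only [← measureReal_def, setOf_lt_hitTime_eq_noHit, setOf_hitTime_le_eq_compl_noHit]
  set avoid := noHit (shift 𝒜) A
  have hA : MeasurableSet A := coordSigma_le_pi _ _ _ hAmeas
  have hgap : |μ.real (avoid 0 (a + s)) - μ.real (avoid 0 a ∩ avoid (a + 2 * n) (a + s))| ≤
      μ.real (avoid 0 (2 * n))ᶜ := by
    have := measureReal_compl_noHit_add hT hA 0 (2 * n) a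
    rw [zero_add, add_comm (2 * n)] at this
    exact this ▸ abs_measureReal_noHit_sub_inter_le (by omega) (by omega)
  have hmix : |μ.real (avoid 0 a ∩ avoid (a + 2 * n) (a + s)) -
      μ.real (avoid 0 a) * μ.real (avoid 0 (s - 2 * n))| ≤ alphaMix μ n := by
    have := measureReal_noHit_add hT hA 0 (s - 2 * n) (a + 2 * n)
    rw [zero_add, show s - 2 * n + (a + 2 * n) = a + s by omega] at this
    exact this ▸ abs_measureReal_inter_sub_mul_le_alphaMix (N := a + (n - 1)) (M := a + s) μ
      (measurableSet_noHit_coordSigma hAmeas (by omega) le_rfl)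
      (measurableSet_noHit_coordSigma hAmeas (by omega) (by omega))
  exact (abs_sub_le _ _ _).trans (add_le_add hgap hmix)

/-- **Almost-multiplicativity of the tail `H(k) = μ(τ_A > k)` along multiples of `s`.**
For a shift system with α-mixing coefficients `α(·)`, `A ∈ ℱ_0^{n-1}`, every `s > 2n` and
every `j ≥ 1`, `|H(js) − H((j−1)s)·H(s−2n)| ≤ μ(τ_A ≤ 2n) + α(n)`. -/
theorem tail_almost_multiplicative
    {𝒜 : Type*} [Countable 𝒜] [MeasurableSpace 𝒜] [DiscreteMeasurableSpace 𝒜]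
    (μ : Measure (ℕ → 𝒜)) [IsProbabilityMeasure μ]
    (hT : MeasurePreserving (shift 𝒜) μ μ)
    (n : ℕ) (A : Set (ℕ → 𝒜))
    (hAmeas : MeasurableSet[coordSigma 𝒜 0 (n - 1)] A)
    (s : ℕ) (hs : 2 * n < s) (j : ℕ) (hj : 1 ≤ j) :
    |(μ {x | ((j * s : ℕ) : ℕ∞) < hitTime (shift 𝒜) A x}).toReal -
        (μ {x | (((j - 1) * s : ℕ) : ℕ∞) < hitTime (shift 𝒜) A x}).toReal *
          (μ {x | ((s - 2 * n : ℕ) : ℕ∞) < hitTime (shift 𝒜) A x}).toReal| ≤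
      (μ {x | hitTime (shift 𝒜) A x ≤ ((2 * n : ℕ) : ℕ∞)}).toReal + alphaMix μ n :=
  tail_almost_multiplicative_general μ hT n A hAmeas s hs j hj
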